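/- arXiv:2603.26290 — 2 statements merged into one kernel-verified Lean document; each statement's English description precedes it below -/
import Mathlib

section
/- Let r_A, r_B, x be positive reals and γ ∈ (0, 1]. In a constant-product pool with fee parameter γ, a swap inputting x units of asset A outputs b = γ·r_B·x/(r_A + γ·x) units of asset B (the unique b with (r_A + γ·x)·(r_B − b) = r_A·r_B), after which the reserves are (r_A + x, r_B − b). Swapping these b units of asset B back into the pool (now with reserves (r_A + x, r_B − b)) then outputs exactly x' = γ²·x·(r_A + x)/(r_A + γ²·x) units of asset A. -/
/-- Let `rA, rB, x > 0` and `γ ∈ (0, 1]`. In a constant-product pool with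
fee parameter `γ`, a swap inputting `x` units of asset A outputs
`b = γ·rB·x/(rA + γ·x)` units of asset B — the unique `b` with
`(rA + γ·x)·(rB − b) = rA·rB` — after which the reserves are `(rA + x, rB − b)`.
Swapping these `b` units of asset B back into the pool (output `o` determined by
`((rA + x) − o)·((rB − b) + γ·b) = (rA + x)·(rB − b)`) then outputs exactly
`x' = γ²·x·(rA + x)/(rA + γ²·x)` units of asset A. -/
theorem stmt_11 (rA rB x γ : ℝ) (hA : 0 < rA) (hB : 0 < rB) (hx : 0 < x)
    (hγ0 : 0 < γ) (hγ1 : γ ≤ 1)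
    (b : ℝ) (hb : b = γ * rB * x / (rA + γ * x)) :
    -- b satisfies the fee-γ invariant and is the unique real doing so
    (rA + γ * x) * (rB - b) = rA * rB ∧
    (∀ b₀ : ℝ, (rA + γ * x) * (rB - b₀) = rA * rB → b₀ = b) ∧
    -- swapping the b units of asset B back outputs exactly γ²·x·(rA + x)/(rA + γ²·x)
    (∀ o : ℝ, ((rA + x) - o) * ((rB - b) + γ * b) = (rA + x) * (rB - b) →
      o = γ ^ 2 * x * (rA + x) / (rA + γ ^ 2 * x)) := by
  have h1 : (0:ℝ) < rA + γ * x := by positivity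
  have h2 : (0:ℝ) < rA + γ ^ 2 * x := by positivity
  have hbval : b = γ * rB * x / (rA + γ * x) := hb
  have hD : (rB - b) + γ * b = (rA * rB + γ ^ 2 * rB * x) / (rA + γ * x) := by
    rw [hbval]; field_simp; ring
  have hDpos : (0:ℝ) < (rB - b) + γ * b := by
    rw [hD]; positivity
  refine ⟨?_, ?_, ?_⟩
  · rw [hbval]; field_simp; ring
  · intro b₀ h
    rw [hbval]
    field_simp
    nlinarith [h]
  · intro o ho
    have hoD : o * ((rB - b) + γ * b) = (rA + x) * (γ * b) := by nlinarith [ho]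
    rw [hD, hbval] at hoD
    rw [eq_div_iff (ne_of_gt h2)]
    field_simp at hoD
    nlinarith [hoD]
end

section
/- Round trips through a fee-charging constant-product pool are strictly lossy: let r_A, r_B, x be positive reals and γ ∈ (0, 1], and let x' = γ²·x·(r_A + x)/(r_A + γ²·x) be the asset-A amount recovered from swapping x units of A into the pool and swapping the resulting asset-B output back. Then x' < x if γ < 1, and x' = x if γ = 1. -/
/-!
The loss of a round trip has the closed form
`x - x' = x · r_A · (1 - γ²) / (r_A + γ² x)`,
which is positive when `γ² < 1` and vanishes when `γ = 1`.
-/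

theorem sub_roundTrip_eq {rA x γ : ℝ} (hden : rA + γ ^ 2 * x ≠ 0) :
    x - γ ^ 2 * x * (rA + x) / (rA + γ ^ 2 * x) = x * rA * (1 - γ ^ 2) / (rA + γ ^ 2 * x) := by
  rw [eq_div_iff hden, sub_mul, div_mul_cancel₀ _ hden]
  ring

theorem roundTrip_lt_self {rA x γ : ℝ} (hA : 0 < rA) (hx : 0 < x) (hγ : γ ^ 2 < 1) :
    γ ^ 2 * x * (rA + x) / (rA + γ ^ 2 * x) < x := by
  have hden : 0 < rA + γ ^ 2 * x := by positivity
  have hloss : 0 < x * rA * (1 - γ ^ 2) / (rA + γ ^ 2 * x) := by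
    have : 0 < 1 - γ ^ 2 := sub_pos.mpr hγ
    positivity
  linarith [sub_roundTrip_eq hden.ne']

theorem stmt_12_general (rA x γ : ℝ) (hA : 0 < rA) (hx : 0 < x)
    (hγ0 : 0 < γ) :
    (γ < 1 → γ ^ 2 * x * (rA + x) / (rA + γ ^ 2 * x) < x) ∧
    (γ = 1 → γ ^ 2 * x * (rA + x) / (rA + γ ^ 2 * x) = x) := by
  refine ⟨fun hlt => roundTrip_lt_self hA hx (pow_lt_one₀ hγ0.le hlt two_ne_zero), ?_⟩
  rintro rfl
  rw [one_pow, one_mul, mul_div_cancel_right₀ _ (by positivity)]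

/-- Round trips through a fee-charging constant-product pool are strictly
lossy. Let `rA, rB, x > 0`, `γ ∈ (0, 1]`, and let `x' = γ²·x·(rA + x)/(rA + γ²·x)` be the
asset-A amount recovered from swapping `x` units of A into the pool and swapping the
resulting asset-B output back. Then `x' < x` if `γ < 1`, and `x' = x` if `γ = 1`. -/
theorem stmt_12 (rA rB x γ : ℝ) (hA : 0 < rA) (hB : 0 < rB) (hx : 0 < x)
    (hγ0 : 0 < γ) (hγ1 : γ ≤ 1) :
    (γ < 1 → γ ^ 2 * x * (rA + x) / (rA + γ ^ 2 * x) < x) ∧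
    (γ = 1 → γ ^ 2 * x * (rA + x) / (rA + γ ^ 2 * x) = x) :=
  stmt_12_general rA x γ hA hx hγ0
end
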